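/- For the singular linear space case t = 2: with P a fixed subspace of type (l₁,l₂) in F_q^{n₁+n₂}, the number of subspaces of type (k₁,k₂) containing P equals q^{(k₁−k₂−l₁+l₂)(n₂−k₂)} · [n₂−l₂ choose k₂−l₂]_q · [n₁−l₁+l₂ choose k₁−k₂−l₁+l₂]_q, provided 0 ≤ l₁−l₂ ≤ k₁−k₂ ≤ n₁ and 0 ≤ l₂ ≤ k₂ ≤ n₂. -/

import Mathlib

/-- Gaussian binomial coefficient, via the q-Pascal recursion. -/
def gaussBinom (q : ℕ) : ℕ → ℕ → ℕ
  | _, 0 => 1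
  | 0, _ + 1 => 0
  | m + 1, i + 1 => gaussBinom q m i + q ^ (i + 1) * gaussBinom q m (i + 1)

/-- The subspace of `F^N` spanned by the standard basis vectors `e_j` with `c ≤ j`. -/
def lastSpan (F : Type) [Field F] (N c : ℕ) : Submodule F (Fin N → F) :=
  Submodule.span F {v | ∃ j : Fin N, c ≤ (j : ℕ) ∧ v = Pi.single j 1}

/-!
Passing to `V ⧸ P` turns the subspaces of type `(k₁, k₂)` containing `P` into the subspaces of
type `(k₁ - l₁, k₂ - l₂)` with respect to the image of `E₂`, which has dimension `n₂ - l₂` in a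
space of dimension `(n₁ - (l₁ - l₂)) + (n₂ - l₂)`; so it suffices to count when `P = 0`.

A subspace `Q` of a space `V ⊇ E` is determined by `A = Q ∩ E`, by its image `B` in `V ⧸ E`, and
by a linear map `B → E ⧸ A`: modulo `A`, `Q` is the image of a section over `B` of
`V ⧸ A → V ⧸ E`, and these sections form a torsor under `Hom(B, E ⧸ A)`. Hence there are
`q ^ (dim B * (dim E - dim A))` subspaces over each pair `(A, B)`. Subspaces of a fixed dimension
are counted by the Gaussian binomials through the `q`-Pascal recursion, splitting according to
whether they contain a fixed line.
-/

open Module Submodule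

lemma Nat.card_subtype_eq_add_card_subtype_and_not {α : Type*} [Finite α] (p r : α → Prop) :
    Nat.card {x // p x} = Nat.card {x // p x ∧ r x} + Nat.card {x // p x ∧ ¬r x} := by
  classical
  rw [← Nat.card_sum]
  exact Nat.card_congr <| (Equiv.sumCompl fun y : {x // p x} => r y).symm.trans <|
    (Equiv.subtypeSubtypeEquivSubtypeInter p r).sumCongr
      (Equiv.subtypeSubtypeEquivSubtypeInter p fun x => ¬r x)

lemma Nat.card_subtype_eq_mul_of_card_fiber {α β : Type*} [Finite α] [Finite β]
    {p : α → Prop} {r : β → Prop} (f : α → β) (hf : ∀ x, p x → r (f x)) (c : ℕ)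
    (hc : ∀ y, r y → Nat.card {x // p x ∧ f x = y} = c) :
    Nat.card {x // p x} = Nat.card {y // r y} * c := by
  classical
  let g : {x // p x} → {y // r y} := fun x => ⟨f x, hf x x.2⟩
  have hfiber (y : {y // r y}) : Nat.card {x // g x = y} = c := by
    rw [← hc y y.2]
    exact Nat.card_congr <| (Equiv.subtypeEquivRight fun x => Subtype.ext_iff).trans <|
      Equiv.subtypeSubtypeEquivSubtypeInter p (f · = y)
  have := Fintype.ofFinite {y // r y}
  rw [← Nat.card_congr (Equiv.sigmaFiberEquiv g), Nat.card_sigma, Nat.card_eq_fintype_card]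
  simp [hfiber, mul_comm]

section Correspondence

variable {R M : Type*} [Ring R] [AddCommGroup M] [Module R M]

lemma Submodule.card_and_le_eq_card_comap_mkQ (P : Submodule R M) (p : Submodule R M → Prop) :
    Nat.card {Q // p Q ∧ P ≤ Q} = Nat.card {Q : Submodule R (M ⧸ P) // p (Q.comap P.mkQ)} :=
  Nat.card_congr <| ((Equiv.subtypeEquivRight fun _ => and_comm).trans
      (Equiv.subtypeSubtypeEquivSubtypeInter (· ∈ Set.Ici P) p).symm).trans
      ((comapMkQRelIso P).toEquiv.subtypeEquiv fun _ => Iff.rfl).symm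

lemma Submodule.card_le_and_finrank_eq (E : Submodule R M) (k : ℕ) :
    Nat.card {A : Submodule R M // A ≤ E ∧ finrank R A = k} =
      Nat.card {A : Submodule R E // finrank R A = k} :=
  Nat.card_congr <| (Equiv.subtypeSubtypeEquivSubtypeInter (· ≤ E) (finrank R · = k)).symm.trans
    ((MapSubtype.orderIso E).toEquiv.subtypeEquiv fun A =>
      (finrank_map_subtype_eq E A).symm ▸ Iff.rfl).symm

end Correspondence

section Finrank

variable {F V : Type*} [Field F] [AddCommGroup V] [Module F V] [FiniteDimensional F V]

lemma Submodule.finrank_map_mkQ_add_finrank_inf (P W : Submodule F V) :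
    finrank F (W.map P.mkQ) + finrank F ↥(W ⊓ P) = finrank F W := by
  have h := LinearMap.finrank_range_add_finrank_ker (P.mkQ ∘ₗ W.subtype)
  rwa [LinearMap.range_comp, range_subtype, LinearMap.ker_comp, ker_mkQ,
    ← finrank_map_subtype_eq, map_comap_subtype] at h

lemma Submodule.finrank_comap_mkQ (P : Submodule F V) (Q : Submodule F (V ⧸ P)) :
    finrank F (Q.comap P.mkQ) = finrank F Q + finrank F P := by
  rw [← finrank_map_mkQ_add_finrank_inf P, map_comap_eq_of_surjective P.mkQ_surjective,
    inf_eq_right.mpr (le_comap_mkQ P Q)]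

lemma Submodule.card_finrank_eq_zero : Nat.card {Q : Submodule F V // finrank F Q = 0} = 1 := by
  simp [finrank_eq_zero]

lemma Submodule.finrank_comap_mkQ_inf (P E : Submodule F V) (Q : Submodule F (V ⧸ P)) :
    finrank F ↥(Q.comap P.mkQ ⊓ E) = finrank F ↥(Q ⊓ E.map P.mkQ) + finrank F ↥(E ⊓ P) := by
  rw [← finrank_map_mkQ_add_finrank_inf P, inf_comm Q, map_inf_eq_map_inf_comap, inf_comm E,
    inf_assoc, inf_eq_right.mpr (inf_le_right.trans (le_comap_mkQ P Q))]

end Finrank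

open LinearMap

section Sections
variable {R M N : Type*} [Ring R] [AddCommGroup M] [Module R M] [AddCommGroup N] [Module R N]

lemma LinearMap.card_sections_eq_card_graphs (ρ : M →ₗ[R] N) (B : Submodule R N) :
    Nat.card {σ : B →ₗ[R] M // ρ ∘ₗ σ = B.subtype} =
      Nat.card {Q : Submodule R M // Q ⊓ ker ρ = ⊥ ∧ Q.map ρ = B} := by
  have hρσ (σ : {σ : B →ₗ[R] M // ρ ∘ₗ σ = B.subtype}) (b : B) : ρ (σ.1 b) = b :=
    congr($(σ.2) b)
  refine Nat.card_congr (Equiv.ofBijective (fun σ => ⟨range σ.1, ?_, ?_⟩) ⟨?_, ?_⟩)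
  · refine eq_bot_iff.mpr ?_
    rintro _ ⟨⟨b, rfl⟩, hb⟩
    have hb0 : b = 0 := Subtype.ext <| (hρσ σ b).symm.trans hb
    simp [hb0]
  · rw [← range_comp, σ.2, range_subtype]
  · rintro σ τ h
    refine Subtype.ext <| LinearMap.ext fun b => ?_
    have hrange : range σ.1 = range τ.1 := congr_arg Subtype.val h
    obtain ⟨b', hb'⟩ : σ.1 b ∈ range τ.1 := hrange ▸ mem_range_self σ.1 b
    have hbb' : b' = b := Subtype.ext <| by rw [← hρσ τ b', hb', hρσ σ b]
    rw [← hb', hbb']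
  · rintro ⟨Q, hker, hmap⟩
    let ρQ : Q →ₗ[R] B :=
      (ρ ∘ₗ Q.subtype).codRestrict B fun q => hmap ▸ mem_map_of_mem q.2
    have hinj : Function.Injective ρQ := by
      refine (injective_iff_map_eq_zero ρQ).mpr fun q hq => ?_
      have : (q : M) ∈ Q ⊓ ker ρ := ⟨q.2, congr_arg Subtype.val hq⟩
      simpa [hker] using this
    have hsurj : Function.Surjective ρQ := by
      rintro ⟨b, hb⟩
      obtain ⟨q, hq, rfl⟩ := mem_map.mp (hmap ▸ hb)
      exact ⟨⟨q, hq⟩, rfl⟩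
    let e := LinearEquiv.ofBijective ρQ ⟨hinj, hsurj⟩
    refine ⟨⟨Q.subtype ∘ₗ e.symm.toLinearMap, LinearMap.ext fun b => ?_⟩, ?_⟩
    · exact congr_arg Subtype.val (e.apply_symm_apply b)
    · simp [range_comp]

end Sections

section Torsor
variable {F M N : Type*} [Field F] [AddCommGroup M] [Module F M] [AddCommGroup N] [Module F N]

lemma LinearMap.card_sections_eq_card_linearMap_ker (ρ : M →ₗ[F] N) (hρ : Function.Surjective ρ)
    (B : Submodule F N) :
    Nat.card {σ : B →ₗ[F] M // ρ ∘ₗ σ = B.subtype} = Nat.card (B →ₗ[F] ker ρ) := by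
  obtain ⟨s, hs⟩ := ρ.exists_rightInverse_of_surjective (range_eq_top.mpr hρ)
  have hs' (y : N) : ρ (s y) = y := congr($hs y)
  have hσ (σ : {σ : B →ₗ[F] M // ρ ∘ₗ σ = B.subtype}) (b : B) : ρ (σ.1 b) = b :=
    congr($(σ.2) b)
  refine Nat.card_congr
    { toFun := fun σ => (σ.1 - s ∘ₗ B.subtype).codRestrict (ker ρ) fun b => ?_
      invFun := fun τ => ⟨s ∘ₗ B.subtype + (ker ρ).subtype ∘ₗ τ, ?_⟩
      left_inv := fun σ => ?_
      right_inv := fun τ => ?_ }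
  · simp [mem_ker, hσ, hs']
  · ext b; simp [hs']
  · ext b
    change s b + (σ.1 b - s b) = σ.1 b
    abel
  · ext b; simp

end Torsor

section Counting
variable {F V : Type*} [Field F] [Fintype F] [AddCommGroup V] [Module F V] [FiniteDimensional F V]

lemma LinearMap.card_inf_ker_eq_bot_map_eq {N : Type*} [AddCommGroup N] [Module F N]
    [FiniteDimensional F N] (ρ : V →ₗ[F] N) (hρ : Function.Surjective ρ) (B : Submodule F N) :
    Nat.card {Q : Submodule F V // Q ⊓ ker ρ = ⊥ ∧ Q.map ρ = B} =
      Fintype.card F ^ (finrank F B * finrank F (ker ρ)) := by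
  rw [← ρ.card_sections_eq_card_graphs, ρ.card_sections_eq_card_linearMap_ker hρ B,
    Module.natCard_eq_pow_finrank (K := F), finrank_linearMap, Nat.card_eq_fintype_card]

lemma Submodule.card_inf_eq_map_mkQ_eq {A E : Submodule F V} (hAE : A ≤ E)
    (B : Submodule F (V ⧸ E)) :
    Nat.card {Q : Submodule F V // Q ⊓ E = A ∧ Q.map E.mkQ = B} =
      Fintype.card F ^ (finrank F B * (finrank F E - finrank F A)) := by
  let ρ := factor hAE
  have hker : ker ρ = E.map A.mkQ := by simp [ρ, ker_mapQ]
  have hkerrank : finrank F (ker ρ) = finrank F E - finrank F A := by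
    have := finrank_map_mkQ_add_finrank_inf A E
    rw [inf_eq_right.mpr hAE, ← hker] at this
    omega
  have hmap (Q : Submodule F (V ⧸ A)) : (Q.comap A.mkQ).map E.mkQ = Q.map ρ := by
    rw [← factor_comp_mk hAE, map_comp, map_comap_eq_of_surjective A.mkQ_surjective]
  have hinf (Q : Submodule F (V ⧸ A)) : Q.comap A.mkQ ⊓ E = A ↔ Q ⊓ ker ρ = ⊥ := by
    rw [hker, inf_comm Q, map_inf_eq_map_inf_comap, ← le_bot_iff, map_le_iff_le_comap, comap_bot,
      ker_mkQ, inf_comm E, le_antisymm_iff, and_iff_left (le_inf (le_comap_mkQ A Q) hAE)]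
  rw [← hkerrank, ← ρ.card_inf_ker_eq_bot_map_eq (factor_surjective hAE)]
  calc Nat.card {Q : Submodule F V // Q ⊓ E = A ∧ Q.map E.mkQ = B}
      = Nat.card {Q : Submodule F V // (Q ⊓ E = A ∧ Q.map E.mkQ = B) ∧ A ≤ Q} :=
        Nat.card_congr <| Equiv.subtypeEquivRight fun Q =>
          ⟨fun h => ⟨h, h.1 ▸ inf_le_left⟩, And.left⟩
    _ = _ := by
      rw [card_and_le_eq_card_comap_mkQ]
      exact Nat.card_congr <| Equiv.subtypeEquivRight fun Q => by rw [hinf, hmap]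

lemma gaussBinom_zero_right (q n : ℕ) : gaussBinom q n 0 = 1 := by
  cases n <;> rfl

theorem Submodule.card_finrank_eq {n : ℕ} (hV : finrank F V = n) (k : ℕ) :
    Nat.card {Q : Submodule F V // finrank F Q = k} = gaussBinom (Fintype.card F) n k := by
  induction n generalizing V k with
  | zero =>
    rcases k with _ | k
    · exact card_finrank_eq_zero
    · have : IsEmpty {Q : Submodule F V // finrank F Q = k + 1} :=
        ⟨fun Q => by have := Q.1.finrank_le; omega⟩
      exact Nat.card_of_isEmpty
  | succ n ih =>
    rcases k with _ | k
    · rw [card_finrank_eq_zero, gaussBinom_zero_right]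
    have : Nontrivial V := Module.nontrivial_of_finrank_pos (R := F) (by omega)
    have : Finite V := Module.finite_of_finite F
    obtain ⟨v, hv⟩ := exists_ne (0 : V)
    have hL : finrank F (F ∙ v) = 1 := finrank_span_singleton hv
    have hVL : finrank F (V ⧸ F ∙ v) = n := by
      have := (F ∙ v).finrank_quotient_add_finrank
      omega
    have hcontain : Nat.card {Q : Submodule F V // finrank F Q = k + 1 ∧ (F ∙ v) ≤ Q} =
        gaussBinom (Fintype.card F) n k := by
      rw [card_and_le_eq_card_comap_mkQ, ← ih hVL k]
      exact Nat.card_congr <| Equiv.subtypeEquivRight fun Q => by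
        rw [finrank_comap_mkQ, hL, Nat.add_right_cancel_iff]
    have hnot : Nat.card {Q : Submodule F V // finrank F Q = k + 1 ∧ ¬(F ∙ v) ≤ Q} =
        gaussBinom (Fintype.card F) n (k + 1) * Fintype.card F ^ (k + 1) := by
      have hinf (Q : Submodule F V) : Q ⊓ (F ∙ v) = ⊥ ↔ ¬(F ∙ v) ≤ Q := by
        rw [← disjoint_iff, disjoint_span_singleton' hv, span_singleton_le_iff_mem]
      have hrank (Q : Submodule F V) (hQ : ¬(F ∙ v) ≤ Q) :
          finrank F (Q.map (F ∙ v).mkQ) = finrank F Q := by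
        have := finrank_map_mkQ_add_finrank_inf (F ∙ v) Q
        rwa [(hinf Q).mpr hQ, finrank_bot, add_zero] at this
      have : Finite (V ⧸ F ∙ v) := Module.finite_of_finite F
      rw [← ih hVL (k + 1)]
      refine Nat.card_subtype_eq_mul_of_card_fiber (fun Q => Q.map (F ∙ v).mkQ)
        (fun Q hQ => (hrank Q hQ.2).trans hQ.1) _ fun B hB => ?_
      have := card_inf_eq_map_mkQ_eq (bot_le : ⊥ ≤ F ∙ v) B
      rw [hB, hL, finrank_bot, Nat.sub_zero, mul_one] at this
      rw [← this]
      refine Nat.card_congr <| Equiv.subtypeEquivRight fun Q => ?_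
      rw [hinf]
      exact ⟨fun h => ⟨h.1.2, h.2⟩, fun h => ⟨⟨(hrank Q h.1).symm.trans (h.2 ▸ hB), h.1⟩, h.2⟩⟩
    rw [Nat.card_subtype_eq_add_card_subtype_and_not _ ((F ∙ v) ≤ ·), hcontain, hnot, mul_comm]
    rfl

theorem Submodule.card_finrank_eq_finrank_inf_eq (E : Submodule F V) {a b k₁ k₂ : ℕ}
    (hV : finrank F V = a + b) (hE : finrank F E = b) (hk : k₂ ≤ k₁) :
    Nat.card {Q : Submodule F V // finrank F Q = k₁ ∧ finrank F ↥(Q ⊓ E) = k₂} =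
      Fintype.card F ^ ((k₁ - k₂) * (b - k₂)) * gaussBinom (Fintype.card F) b k₂ *
        gaussBinom (Fintype.card F) a (k₁ - k₂) := by
  have : Finite V := Module.finite_of_finite F
  have : Finite (V ⧸ E) := Module.finite_of_finite F
  have hVE : finrank F (V ⧸ E) = a := by
    have := E.finrank_quotient_add_finrank
    omega
  have hsplit (Q : Submodule F V) := finrank_map_mkQ_add_finrank_inf E Q
  rw [Nat.card_subtype_eq_mul_of_card_fiber (fun Q => (Q ⊓ E, Q.map E.mkQ))
    (r := fun AB => (AB.1 ≤ E ∧ finrank F AB.1 = k₂) ∧ finrank F AB.2 = k₁ - k₂)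
    (fun Q hQ => ⟨⟨inf_le_right, hQ.2⟩, by
      show finrank F (Q.map E.mkQ) = k₁ - k₂
      have := hsplit Q
      omega⟩)
    (Fintype.card F ^ ((k₁ - k₂) * (b - k₂))) ?fiber]
  · rw [Nat.card_congr (Equiv.subtypeProdEquivProd (p := fun A => A ≤ E ∧ finrank F A = k₂)
      (q := fun B : Submodule F (V ⧸ E) => finrank F B = k₁ - k₂)), Nat.card_prod,
      card_le_and_finrank_eq, card_finrank_eq hE, card_finrank_eq hVE]
    ring
  rintro ⟨A, B⟩ ⟨⟨hAE, hA : finrank F A = k₂⟩, hB : finrank F B = k₁ - k₂⟩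
  rw [show (k₁ - k₂) * (b - k₂) = finrank F B * (finrank F E - finrank F A) by rw [hA, hB, hE],
    ← card_inf_eq_map_mkQ_eq hAE B]
  refine Nat.card_congr <| Equiv.subtypeEquivRight fun Q => ?_
  simp only [Prod.mk.injEq]
  refine ⟨And.right, fun h => ⟨⟨?_, h.1 ▸ hA⟩, h⟩⟩
  rw [← hsplit Q, h.1, h.2, hA, hB]
  omega

end Counting

lemma finrank_lastSpan (F : Type) [Field F] (N c : ℕ) :
    finrank F (lastSpan F N c) = N - c := by
  have hspan : lastSpan F N c =
      span F (Set.range fun j : {j : Fin N // c ≤ (j : ℕ)} => Pi.basisFun F (Fin N) j) := by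
    unfold lastSpan
    congr 1
    ext v
    simp [eq_comm]
  have hli : LinearIndependent F fun j : {j : Fin N // c ≤ (j : ℕ)} => Pi.basisFun F (Fin N) j :=
    (Pi.basisFun F (Fin N)).linearIndependent.comp _ Subtype.val_injective
  rw [hspan, finrank_span_eq_card hli]
  simp_rw [← not_lt]
  rw [Fintype.card_subtype_compl, Fintype.card_subtype, Fin.card_filter_val_lt, Fintype.card_fin]
  omega

theorem stmt11_general {F : Type} [Field F] [Fintype F] (q n₁ n₂ k₁ k₂ l₁ l₂ : ℕ)
    (hq : Fintype.card F = q)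
    (h1 : l₂ ≤ l₁) (h2 : l₁ - l₂ ≤ k₁ - k₂) (h3 : k₂ ≤ k₁) (h4 : k₁ - k₂ ≤ n₁)
    (h5 : l₂ ≤ k₂)
    (P : Submodule F (Fin (n₁ + n₂) → F))
    (hP : Module.finrank F P = l₁ ∧ Module.finrank F ↥(P ⊓ lastSpan F (n₁ + n₂) n₁) = l₂) :
    Nat.card {Q : Submodule F (Fin (n₁ + n₂) → F) //
        (Module.finrank F Q = k₁ ∧
          Module.finrank F ↥(Q ⊓ lastSpan F (n₁ + n₂) n₁) = k₂) ∧ P ≤ Q} =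
      q ^ (((k₁ - k₂) - (l₁ - l₂)) * (n₂ - k₂)) * gaussBinom q (n₂ - l₂) (k₂ - l₂) *
        gaussBinom q (n₁ - (l₁ - l₂)) ((k₁ - k₂) - (l₁ - l₂)) := by
  obtain ⟨hP₁, hP₂⟩ := hP
  set E := lastSpan F (n₁ + n₂) n₁
  have hE : finrank F E = n₂ := by rw [finrank_lastSpan, Nat.add_sub_cancel_left]
  have hEP : finrank F (E.map P.mkQ) + l₂ = n₂ := by
    rw [← hP₂, inf_comm, finrank_map_mkQ_add_finrank_inf P E, hE]
  have hVP : finrank F ((Fin (n₁ + n₂) → F) ⧸ P) = (n₁ - (l₁ - l₂)) + (n₂ - l₂) := by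
    have := P.finrank_quotient_add_finrank
    rw [finrank_fin_fun, hP₁] at this
    omega
  rw [card_and_le_eq_card_comap_mkQ, ← hq]
  calc _ = Nat.card {Q : Submodule F (_ ⧸ P) //
          finrank F Q = k₁ - l₁ ∧ finrank F ↥(Q ⊓ E.map P.mkQ) = k₂ - l₂} :=
        Nat.card_congr <| Equiv.subtypeEquivRight fun Q => by
          rw [finrank_comap_mkQ, finrank_comap_mkQ_inf, inf_comm E, hP₁, hP₂]
          omega
    _ = _ := by
      rw [card_finrank_eq_finrank_inf_eq _ hVP (by omega) (by omega),
        show k₁ - l₁ - (k₂ - l₂) = k₁ - k₂ - (l₁ - l₂) by omega,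
        show n₂ - l₂ - (k₂ - l₂) = n₂ - k₂ by omega]

/-- In the singular linear space `F_q^{n₁+n₂}` (the case `t = 2`), the number of
subspaces of type `(k₁,k₂)` containing a fixed subspace `P` of type `(l₁,l₂)`. -/
theorem stmt11 {F : Type} [Field F] [Fintype F] (q n₁ n₂ k₁ k₂ l₁ l₂ : ℕ)
    (hq : Fintype.card F = q)
    (h1 : l₂ ≤ l₁) (h2 : l₁ - l₂ ≤ k₁ - k₂) (h3 : k₂ ≤ k₁) (h4 : k₁ - k₂ ≤ n₁)
    (h5 : l₂ ≤ k₂) (h6 : k₂ ≤ n₂)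
    (P : Submodule F (Fin (n₁ + n₂) → F))
    (hP : Module.finrank F P = l₁ ∧ Module.finrank F ↥(P ⊓ lastSpan F (n₁ + n₂) n₁) = l₂) :
    Nat.card {Q : Submodule F (Fin (n₁ + n₂) → F) //
        (Module.finrank F Q = k₁ ∧
          Module.finrank F ↥(Q ⊓ lastSpan F (n₁ + n₂) n₁) = k₂) ∧ P ≤ Q} =
      q ^ (((k₁ - k₂) - (l₁ - l₂)) * (n₂ - k₂)) * gaussBinom q (n₂ - l₂) (k₂ - l₂) *
        gaussBinom q (n₁ - (l₁ - l₂)) ((k₁ - k₂) - (l₁ - l₂)) :=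
  stmt11_general q n₁ n₂ k₁ k₂ l₁ l₂ hq h1 h2 h3 h4 h5 P hP
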